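/- arXiv:0801.4358 — 4 statements merged into one kernel-verified Lean document; each statement's English description precedes it below -/
import Mathlib

section
/- Let d^D : Γ(Λ^k D*) → Γ(Λ^{k+1} D*) be an almost differential on a vector bundle τ_D : D → Q, i.e., an R-linear degree-1 operator satisfying d^D(α∧β) = d^Dα ∧ β + (−1)^k α ∧ d^Dβ. Define ρ(X)(f) = (d^D f)(X) and α(⟦X,Y⟧) = d^D(α(Y))(X) − d^D(α(X))(Y) − (d^D α)(X,Y) for sections X, Y of D, sections α of D*, and f ∈ C^∞(Q). Then (⟦·,·⟧, ρ) is a skew-symmetric algebroid structure on D. -/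
/-
A section of `D` is determined by its pairings with 1-forms (a functional on one fibre, placed
at its base point, is a 1-form), so each identity for `⟦·,·⟧` is checked after pairing with an
arbitrary 1-form `α`: there it follows from the defining formula, the tensoriality of `α` and
`d^D α`, the antisymmetry of `d^D α`, and the ℝ-linearity of `d^D`. The graded Leibniz rule in
degree `0 + 0`, where the wedge product is the pointwise product, makes each `ρ(X)` a derivation
and produces the term `ρ(X)(f) Y` in the Leibniz rule of the bracket.
-/

/- STATEMENT 3.
An almost differential on a vector bundle τ_D : D → Q is an ℝ-linear degree-one
operator d^D on forms (sections of Λ^k D*, modelled as alternating C^∞(Q)-multilinear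
maps on tuples of sections of D) satisfying the graded Leibniz rule
d^D(α∧β) = d^Dα ∧ β + (−1)^k α ∧ d^Dβ.  Defining ρ(X)(f) = (d^D f)(X) and
α(⟦X,Y⟧) = d^D(α(Y))(X) − d^D(α(X))(Y) − (d^Dα)(X,Y), the pair (⟦·,·⟧, ρ) is a
skew-symmetric algebroid structure on D. -/

section

variable {Q : Type*} {D : Q → Type*} [∀ q, AddCommGroup (D q)] [∀ q, Module ℝ (D q)]

/-- A raw `k`-form: a map from `k`-tuples of sections of `D` to functions on `Q`. -/
abbrev RawForm (D : Q → Type*) [∀ q, AddCommGroup (D q)] [∀ q, Module ℝ (D q)] (k : ℕ) :=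
  (Fin k → (∀ q, D q)) → Q → ℝ

/-- A raw form is a genuine section of Λ^k D*: it is C^∞(Q)-multilinear and
alternating in its arguments. -/
def IsForm {k : ℕ} (ω : RawForm D k) : Prop :=
  (∀ (X : Fin k → ∀ q, D q) (i : Fin k) (Y Z : ∀ q, D q),
      ω (Function.update X i (fun q => Y q + Z q)) =
        ω (Function.update X i Y) + ω (Function.update X i Z)) ∧
  (∀ (X : Fin k → ∀ q, D q) (i : Fin k) (f : Q → ℝ) (Y : ∀ q, D q),
      ω (Function.update X i (fun q => f q • Y q)) = f * ω (Function.update X i Y)) ∧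
  (∀ (X : Fin k → ∀ q, D q) (i j : Fin k), i ≠ j → X i = X j → ω X = 0)

/-- The wedge product of raw forms (antisymmetrization formula). -/
noncomputable def wedge {k r : ℕ} (ω : RawForm D k) (η : RawForm D r) : RawForm D (k + r) :=
  fun X q =>
    ((k.factorial * r.factorial : ℝ))⁻¹ *
      ∑ σ : Equiv.Perm (Fin (k + r)), ((Equiv.Perm.sign σ : ℤ) : ℝ) *
        (ω (fun i => X (σ (Fin.castAdd r i))) q * η (fun j => X (σ (Fin.natAdd k j))) q)


theorem isForm_of_degree_zero (ω : RawForm D 0) : IsForm ω :=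
  ⟨fun _ i => i.elim0, fun _ i => i.elim0, fun _ i => i.elim0⟩

namespace IsForm

section DegreeOne

variable {α : RawForm D 1}

theorem apply_add (hα : IsForm α) (X Y : ∀ q, D q) :
    α (fun _ => X + Y) = α (fun _ => X) + α (fun _ => Y) := by
  have h := hα.1 (fun _ => X) 0 X Y
  simp only [Function.update_eq_const_of_subsingleton] at h
  exact h

theorem apply_smul (hα : IsForm α) (f : Q → ℝ) (X : ∀ q, D q) :
    α (fun _ => f • X) = f * α (fun _ => X) := by
  have h := hα.2.1 (fun _ => X) 0 f X
  simp only [Function.update_eq_const_of_subsingleton] at h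
  exact h

theorem apply_const_smul (hα : IsForm α) (r : ℝ) (X : ∀ q, D q) :
    α (fun _ => r • X) = r • α (fun _ => X) :=
  hα.apply_smul (fun _ => r) X

theorem apply_neg (hα : IsForm α) (X : ∀ q, D q) : α (fun _ => -X) = -α (fun _ => X) := by
  simpa using hα.apply_const_smul (-1) X

end DegreeOne

section DegreeTwo

variable {ω : RawForm D 2}

theorem apply_cons_add_left (hω : IsForm ω) (X Y Z : ∀ q, D q) :
    ω (Fin.cons (X + Y) fun _ => Z) = ω (Fin.cons X fun _ => Z) + ω (Fin.cons Y fun _ => Z) := by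
  have h := hω.1 (Fin.cons X fun _ => Z) 0 X Y
  simp only [Fin.update_cons_zero] at h
  exact h

theorem apply_cons_add_right (hω : IsForm ω) (X Y Z : ∀ q, D q) :
    ω (Fin.cons X fun _ => Y + Z) = ω (Fin.cons X fun _ => Y) + ω (Fin.cons X fun _ => Z) := by
  have h := hω.1 (Fin.cons X fun _ => Y) (Fin.succ 0) Y Z
  simp only [← Fin.cons_update, Function.update_eq_const_of_subsingleton] at h
  exact h

theorem apply_cons_const_smul_left (hω : IsForm ω) (r : ℝ) (X Y : ∀ q, D q) :
    ω (Fin.cons (r • X) fun _ => Y) = r • ω (Fin.cons X fun _ => Y) := by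
  have h := hω.2.1 (Fin.cons X fun _ => Y) 0 (fun _ => r) X
  simp only [Fin.update_cons_zero] at h
  exact h

theorem apply_cons_smul_right (hω : IsForm ω) (f : Q → ℝ) (X Y : ∀ q, D q) :
    ω (Fin.cons X fun _ => f • Y) = f * ω (Fin.cons X fun _ => Y) := by
  have h := hω.2.1 (Fin.cons X fun _ => Y) (Fin.succ 0) f Y
  simp only [← Fin.cons_update, Function.update_eq_const_of_subsingleton] at h
  exact h

theorem apply_cons_self (hω : IsForm ω) (X : ∀ q, D q) : ω (Fin.cons X fun _ => X) = 0 :=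
  hω.2.2 _ 0 1 (by decide) rfl

theorem apply_cons_swap (hω : IsForm ω) (X Y : ∀ q, D q) :
    ω (Fin.cons X fun _ => Y) = -ω (Fin.cons Y fun _ => X) := by
  have h := hω.apply_cons_self (X + Y)
  rw [hω.apply_cons_add_left, hω.apply_cons_add_right, hω.apply_cons_add_right,
    hω.apply_cons_self, hω.apply_cons_self] at h
  linear_combination h

end DegreeTwo

end IsForm

def dualForm (L : ∀ q, Module.Dual ℝ (D q)) : RawForm D 1 := fun X q => L q (X 0 q)

theorem isForm_dualForm (L : ∀ q, Module.Dual ℝ (D q)) : IsForm (dualForm L) := by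
  refine ⟨fun X i Y Z => ?_, fun X i f Y => ?_,
    fun X i j hij _ => absurd (Subsingleton.elim i j) hij⟩ <;>
    funext q <;> simp [dualForm, Subsingleton.elim i 0]

theorem ext_of_forall_isForm {X Y : ∀ q, D q}
    (h : ∀ α : RawForm D 1, IsForm α → α (fun _ => X) = α (fun _ => Y)) : X = Y := by
  classical
  funext q
  refine Module.eval_apply_injective ℝ (LinearMap.ext fun L => ?_)
  simpa [dualForm] using congrFun (h _ (isForm_dualForm (Pi.single q L))) q

theorem wedge_zero_zero (f g : Q → ℝ) :
    (wedge (fun _ => f) (fun _ => g) : RawForm D (0 + 0)) = fun _ => f * g := by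
  funext X q
  simp [wedge]

theorem wedge_one_zero_apply (α : RawForm D 1) (g : Q → ℝ) (X : ∀ q, D q) :
    (wedge α (fun _ => g) : RawForm D (1 + 0)) (fun _ => X) = α (fun _ => X) * g := by
  funext q
  simp [wedge]

theorem wedge_zero_one_apply (f : Q → ℝ) (α : RawForm D 1) (X : ∀ q, D q) :
    (wedge (fun _ => f) α : RawForm D (0 + 1)) (fun _ => X) = f * α (fun _ => X) := by
  funext q
  simp [wedge]

theorem d_zero_mul (d : ∀ k : ℕ, RawForm D k → RawForm D (k + 1))
    (hleib : ∀ (k r : ℕ) (ω : RawForm D k) (η : RawForm D r), IsForm ω → IsForm η →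
      ∀ X : Fin (k + r + 1) → ∀ q, D q,
        d (k + r) (wedge ω η) X =
          wedge (d k ω) η (fun a => X (Fin.cast (Nat.add_right_comm k 1 r) a)) +
            ((-1 : ℝ) ^ k) • wedge ω (d r η) X)
    (f g : Q → ℝ) (X : ∀ q, D q) :
    d 0 (fun _ => f * g) (fun _ => X) =
      d 0 (fun _ => f) (fun _ => X) * g + f * d 0 (fun _ => g) (fun _ => X) := by
  have h := hleib 0 0 (fun _ => f) (fun _ => g) (isForm_of_degree_zero _)
    (isForm_of_degree_zero _) (fun _ => X)
  rw [wedge_zero_zero] at h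
  rw [h, wedge_one_zero_apply, wedge_zero_one_apply, pow_zero, one_smul]

section Bracket

variable (d₀ : RawForm D 0 → RawForm D 1) (d₁ : RawForm D 1 → RawForm D 2)

def IsDerivedBracket (br : (∀ q, D q) → (∀ q, D q) → (∀ q, D q)) : Prop :=
  ∀ (α : RawForm D 1), IsForm α → ∀ X Y : ∀ q, D q,
    α (fun _ => br X Y) =
      d₀ (fun _ => α (fun _ => Y)) (fun _ => X) -
        d₀ (fun _ => α (fun _ => X)) (fun _ => Y) -
          d₁ α (Fin.cons X (fun _ => Y))

variable {d₀ d₁} {br : (∀ q, D q) → (∀ q, D q) → (∀ q, D q)}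

namespace IsDerivedBracket

theorem skew (hbr : IsDerivedBracket d₀ d₁ br) (hd₁ : ∀ α, IsForm α → IsForm (d₁ α))
    (X Y : ∀ q, D q) : br X Y = -br Y X := by
  refine ext_of_forall_isForm fun α hα => ?_
  rw [hα.apply_neg, hbr α hα, hbr α hα, (hd₁ α hα).apply_cons_swap X Y]
  ring

theorem add_left (hbr : IsDerivedBracket d₀ d₁ br) (hd₀ : ∀ f, IsForm (d₀ f))
    (hd₁ : ∀ α, IsForm α → IsForm (d₁ α))
    (hadd₀ : ∀ f g : Q → ℝ, d₀ (fun _ => f + g) = d₀ (fun _ => f) + d₀ (fun _ => g))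
    (X Y Z : ∀ q, D q) : br (X + Y) Z = br X Z + br Y Z := by
  refine ext_of_forall_isForm fun α hα => ?_
  rw [hα.apply_add, hbr α hα, hbr α hα, hbr α hα, (hd₀ _).apply_add, hα.apply_add, hadd₀,
    (hd₁ α hα).apply_cons_add_left, Pi.add_apply]
  ring

theorem const_smul_left (hbr : IsDerivedBracket d₀ d₁ br) (hd₀ : ∀ f, IsForm (d₀ f))
    (hd₁ : ∀ α, IsForm α → IsForm (d₁ α))
    (hsmul₀ : ∀ (r : ℝ) (f : Q → ℝ), d₀ (fun _ => r • f) = r • d₀ (fun _ => f))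
    (r : ℝ) (X Y : ∀ q, D q) : br (r • X) Y = r • br X Y := by
  refine ext_of_forall_isForm fun α hα => ?_
  rw [hα.apply_const_smul, hbr α hα, hbr α hα, (hd₀ _).apply_const_smul, hα.apply_const_smul,
    hsmul₀, (hd₁ α hα).apply_cons_const_smul_left, Pi.smul_apply]
  module

theorem leibniz (hbr : IsDerivedBracket d₀ d₁ br) (hd₀ : ∀ f, IsForm (d₀ f))
    (hd₁ : ∀ α, IsForm α → IsForm (d₁ α))
    (hmul₀ : ∀ (f g : Q → ℝ) (X : ∀ q, D q), d₀ (fun _ => f * g) (fun _ => X) =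
      d₀ (fun _ => f) (fun _ => X) * g + f * d₀ (fun _ => g) (fun _ => X))
    (X Y : ∀ q, D q) (f : Q → ℝ) :
    br X (f • Y) = f • br X Y + d₀ (fun _ => f) (fun _ => X) • Y := by
  refine ext_of_forall_isForm fun α hα => ?_
  rw [hα.apply_add, hα.apply_smul, hα.apply_smul, hbr α hα, hbr α hα, hα.apply_smul, hmul₀,
    (hd₀ _).apply_smul, (hd₁ α hα).apply_cons_smul_right]
  ring

end IsDerivedBracket

end Bracket

theorem stmt3
    -- the almost differential d^D
    (d : ∀ k : ℕ, RawForm D k → RawForm D (k + 1))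
    -- it maps forms to forms
    (hpres : ∀ (k : ℕ) (ω : RawForm D k), IsForm ω → IsForm (d k ω))
    -- ℝ-linearity
    (hadd : ∀ (k : ℕ) (ω η : RawForm D k), IsForm ω → IsForm η → d k (ω + η) = d k ω + d k η)
    (hsmul : ∀ (k : ℕ) (r : ℝ) (ω : RawForm D k), IsForm ω → d k (r • ω) = r • d k ω)
    -- graded Leibniz rule: d^D(α∧β) = d^Dα ∧ β + (−1)^k α ∧ d^Dβ
    (hleib : ∀ (k r : ℕ) (ω : RawForm D k) (η : RawForm D r), IsForm ω → IsForm η →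
      ∀ X : Fin (k + r + 1) → ∀ q, D q,
        d (k + r) (wedge ω η) X =
          wedge (d k ω) η (fun a => X (Fin.cast (by omega) a)) +
            ((-1 : ℝ) ^ k) • wedge ω (d r η) X)
    -- the bracket ⟦·,·⟧ defined by α(⟦X,Y⟧) = d^D(α(Y))(X) − d^D(α(X))(Y) − (d^Dα)(X,Y)
    (br : (∀ q, D q) → (∀ q, D q) → (∀ q, D q))
    (hbr : ∀ (α : RawForm D 1), IsForm α → ∀ X Y : ∀ q, D q,
      α (fun _ => br X Y) =
        d 0 (fun _ => α (fun _ => Y)) (fun _ => X) -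
          d 0 (fun _ => α (fun _ => X)) (fun _ => Y) -
            d 1 α (Fin.cons X (fun _ => Y)))
    -- the anchor ρ defined by ρ(X)(f) = (d^D f)(X)
    (ρ : (∀ q, D q) → (Q → ℝ) → (Q → ℝ))
    (hρ : ∀ (X : ∀ q, D q) (f : Q → ℝ), ρ X f = d 0 (fun _ => f) (fun _ => X)) :
    -- then (⟦·,·⟧, ρ) is a skew-symmetric algebroid structure on D:
    -- skew-symmetry and ℝ-bilinearity of ⟦·,·⟧
    (∀ X Y, br X Y = - br Y X) ∧
    (∀ X Y Z, br (X + Y) Z = br X Z + br Y Z) ∧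
    (∀ (r : ℝ) X Y, br (r • X) Y = r • br X Y) ∧
    -- ρ is induced by a vector bundle morphism D → TQ: it is C^∞(Q)-linear in the
    -- section argument and each ρ(X) is an ℝ-linear derivation of C^∞(Q)
    (∀ X Y f, ρ (X + Y) f = ρ X f + ρ Y f) ∧
    (∀ (g : Q → ℝ) X f, ρ (fun q => g q • X q) f = g * ρ X f) ∧
    (∀ X f g, ρ X (f + g) = ρ X f + ρ X g) ∧
    (∀ X (r : ℝ) f, ρ X (r • f) = r • ρ X f) ∧
    (∀ X f g, ρ X (f * g) = f * ρ X g + g * ρ X f) ∧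
    -- the Leibniz rule ⟦X, fY⟧ = f⟦X,Y⟧ + ρ(X)(f)Y
    (∀ X Y (f : Q → ℝ),
      br X (fun q => f q • Y q) = fun q => f q • br X Y q + ρ X f q • Y q) := by
  have hd₀ : ∀ f : RawForm D 0, IsForm (d 0 f) := fun f => hpres 0 f (isForm_of_degree_zero f)
  have hadd₀ : ∀ f g : Q → ℝ, d 0 (fun _ => f + g) = d 0 (fun _ => f) + d 0 (fun _ => g) :=
    fun f g => hadd 0 _ _ (isForm_of_degree_zero _) (isForm_of_degree_zero _)
  have hsmul₀ : ∀ (r : ℝ) (f : Q → ℝ), d 0 (fun _ => r • f) = r • d 0 (fun _ => f) :=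
    fun r f => hsmul 0 r _ (isForm_of_degree_zero _)
  have hmul₀ := d_zero_mul d hleib
  have hbr' : IsDerivedBracket (d 0) (d 1) br := hbr
  refine ⟨hbr'.skew (hpres 1), hbr'.add_left hd₀ (hpres 1) hadd₀,
    hbr'.const_smul_left hd₀ (hpres 1) hsmul₀, ?_, ?_, ?_, ?_, ?_, ?_⟩
  · intro X Y f
    simp only [hρ]
    exact (hd₀ _).apply_add X Y
  · intro g X f
    simp only [hρ]
    exact (hd₀ _).apply_smul g X
  · intro X f g
    simp only [hρ, hadd₀, Pi.add_apply]
  · intro X r f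
    simp only [hρ, hsmul₀, Pi.smul_apply]
  · intro X f g
    simp only [hρ, hmul₀]
    ring
  · intro X Y f
    rw [hρ]
    exact hbr'.leibniz hd₀ (hpres 1) hmul₀ X Y f

end
end

section
/- There exists a skew-symmetric algebroid structure on the tangent bundle of R^2 (with coordinates (x,y)) such that the algebroid is not completely nonholonomic, yet every smooth function f on R^2 with d^D f = 0 is constant. Concretely, take the bracket determined by ⟦X_1, X_2⟧ = 0 on the frame X_1 = ∂/∂x, X_2 = ∂/∂y, with anchor ρ(X_1) = ∂/∂x and ρ(X_2) = xy ∂/∂y: then the equations ∂f/∂x = 0 and xy ∂f/∂y = 0 for a smooth f imply f is constant, while Lie^∞_{(x_0,0)}(ρ(D)) ≠ T_{(x_0,0)}R^2. -/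
/- STATEMENT 7.
On Q = ℝ² (so TQ = ℝ² × ℝ², vector fields being maps ℝ² → ℝ²) consider the
skew-symmetric algebroid structure on TQ determined on the frame
X₁ = ∂/∂x, X₂ = ∂/∂y by ⟦X₁,X₂⟧ = 0 and the anchor ρ(X₁) = ∂/∂x,
ρ(X₂) = xy ∂/∂y, i.e. ρ(q)(a,b) = (a, q₁ q₂ b).  Then:
(1) every smooth f : ℝ² → ℝ with d^D f = 0 (that is ∂f/∂x = 0 and
    xy ∂f/∂y = 0) is constant; yet
(2) the algebroid is not completely nonholonomic: at any point (x₀, 0) the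
    evaluation of the smallest Lie algebra of vector fields containing the
    smooth vector fields with values in ρ(D) is not the whole tangent space. -/

/-- The smallest Lie subalgebra of vector fields on ℝ² containing a set `S`;
the Lie bracket of vector fields is [V,W](q) = DW(q)V(q) − DV(q)W(q). -/
inductive LieGen (S : Set (ℝ × ℝ → ℝ × ℝ)) : (ℝ × ℝ → ℝ × ℝ) → Prop
  | base {V} : V ∈ S → LieGen S V
  | add {V W} : LieGen S V → LieGen S W → LieGen S (V + W)
  | smul (r : ℝ) {V} : LieGen S V → LieGen S (r • V)
  | bracket {V W} : LieGen S V → LieGen S W →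
      LieGen S (fun q => fderiv ℝ W q (V q) - fderiv ℝ V q (W q))

/-- The anchor distribution D̃_q = ρ(T_q ℝ²) = {(a, x y b) : a, b ∈ ℝ} at q = (x,y). -/
def DistRho (q : ℝ × ℝ) : Set (ℝ × ℝ) := {v | ∃ a b : ℝ, v = (a, q.1 * q.2 * b)}

section Aux

/-- Derivative of the horizontal slice. -/
lemma hderiv_x (f : ℝ × ℝ → ℝ) (hf : ContDiff ℝ (⊤ : ℕ∞) f) (c x : ℝ) :
    HasDerivAt (fun x => f (x, c)) (fderiv ℝ f (x, c) (1, 0)) x :=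
  ((hf.differentiable (by simp) (x, c)).hasFDerivAt).comp_hasDerivAt x
    ((hasDerivAt_id x).prodMk (hasDerivAt_const x c))

/-- Derivative of the vertical slice at x = 1. -/
lemma hderiv_y (f : ℝ × ℝ → ℝ) (hf : ContDiff ℝ (⊤ : ℕ∞) f) (y : ℝ) :
    HasDerivAt (fun y => f (1, y)) (fderiv ℝ f (1, y) (0, 1)) y :=
  ((hf.differentiable (by simp) (1, y)).hasFDerivAt).comp_hasDerivAt y
    ((hasDerivAt_const y (1:ℝ)).prodMk (hasDerivAt_id y))

lemma fderiv_snd_apply (W : ℝ × ℝ → ℝ × ℝ) (q : ℝ × ℝ) (hW : DifferentiableAt ℝ W q)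
    (u : ℝ × ℝ) : fderiv ℝ (fun q => (W q).2) q u = (fderiv ℝ W q u).2 := by
  have h : HasFDerivAt (fun q => (W q).2)
      ((ContinuousLinearMap.snd ℝ ℝ ℝ).comp (fderiv ℝ W q)) q :=
    (ContinuousLinearMap.snd ℝ ℝ ℝ).hasFDerivAt.comp q hW.hasFDerivAt
  rw [h.fderiv]; rfl

/-- Key tangency lemma: if a smooth W is tangent to the line {y = 0}, then for any
direction tangent to the line, the derivative of the second component vanishes on
the line. -/
lemma tangent_deriv (W : ℝ × ℝ → ℝ × ℝ) (hW : ContDiff ℝ (⊤ : ℕ∞) W)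
    (h0 : ∀ q : ℝ × ℝ, q.2 = 0 → (W q).2 = 0) (x v : ℝ) :
    (fderiv ℝ W (x, 0) (v, 0)).2 = 0 := by
  set g : ℝ × ℝ → ℝ := fun q => (W q).2 with hg
  have hgC : ContDiff ℝ (⊤ : ℕ∞) g := contDiff_snd.comp hW
  -- g is zero along the line, so its x-derivative on the line is zero
  have hslice : (fun x => g (x, 0)) = fun _ => (0:ℝ) := by
    funext x; exact h0 (x, 0) rfl
  have h1 : HasDerivAt (fun x => g (x, 0)) (fderiv ℝ g (x, 0) (1, 0)) x :=
    ((hgC.differentiable (by simp) (x, 0)).hasFDerivAt).comp_hasDerivAt (l := g) x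
      ((hasDerivAt_id x).prodMk (hasDerivAt_const x (0:ℝ)))
  have h2 : HasDerivAt (fun x => g (x, 0)) 0 x := by
    rw [hslice]; exact hasDerivAt_const x 0
  have h3 : fderiv ℝ g (x, 0) (1, 0) = 0 := h1.unique h2
  have h4 : ((v:ℝ), (0:ℝ)) = v • ((1:ℝ), (0:ℝ)) := by simp
  have h5 : fderiv ℝ g (x, 0) (v, 0) = 0 := by
    rw [h4, (fderiv ℝ g (x, 0)).map_smul, h3, smul_zero]
  rw [← fderiv_snd_apply W (x, 0) (hW.differentiable (by simp) (x, 0)) (v, 0)]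
  exact h5

/-- Invariant: every element of the generated Lie algebra is smooth and tangent to
the line {y = 0}. -/
lemma lieGen_tangent {V : ℝ × ℝ → ℝ × ℝ}
    (h : LieGen {W | ContDiff ℝ (⊤ : ℕ∞) W ∧ ∀ q, W q ∈ DistRho q} V) :
    ContDiff ℝ (⊤ : ℕ∞) V ∧ ∀ q : ℝ × ℝ, q.2 = 0 → (V q).2 = 0 := by
  induction h with
  | base hV =>
      obtain ⟨hs, hd⟩ := hV
      refine ⟨hs, fun q hq => ?_⟩
      obtain ⟨a, b, hab⟩ := hd q
      rw [hab]; simp [hq]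
  | add hV hW ihV ihW =>
      exact ⟨ihV.1.add ihW.1, fun q hq => by
        simp [Pi.add_apply, Prod.snd_add, ihV.2 q hq, ihW.2 q hq]⟩
  | smul r hV ihV =>
      exact ⟨ihV.1.const_smul r, fun q hq => by
        simp [Pi.smul_apply, Prod.smul_snd, ihV.2 q hq]⟩
  | @bracket V W hV hW ihV ihW =>
      refine ⟨((ihW.1.fderiv_right (by simp)).clm_apply ihV.1).sub
        ((ihV.1.fderiv_right (by simp)).clm_apply ihW.1), fun q hq => ?_⟩
      obtain ⟨x, y⟩ := q
      simp only at hq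
      subst hq
      have e1 : V (x, 0) = ((V (x, 0)).1, 0) :=
        Prod.ext rfl (ihV.2 (x, 0) rfl)
      have e2 : W (x, 0) = ((W (x, 0)).1, 0) :=
        Prod.ext rfl (ihW.2 (x, 0) rfl)
      have t1 : (fderiv ℝ W (x, 0) (V (x, 0))).2 = 0 := by
        rw [e1]; exact tangent_deriv W ihW.1 ihW.2 x _
      have t2 : (fderiv ℝ V (x, 0) (W (x, 0))).2 = 0 := by
        rw [e2]; exact tangent_deriv V ihV.1 ihV.2 x _
      simp [Prod.snd_sub, t1, t2]

end Aux

theorem stmt7 :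
    -- (1) the equations ∂f/∂x = 0 and xy ∂f/∂y = 0 for a smooth f imply f constant
    (∀ f : ℝ × ℝ → ℝ, ContDiff ℝ (⊤ : ℕ∞) f →
      (∀ p : ℝ × ℝ, fderiv ℝ f p (1, 0) = 0 ∧ p.1 * p.2 * fderiv ℝ f p (0, 1) = 0) →
      ∀ p p' : ℝ × ℝ, f p = f p') ∧
    -- (2) the algebroid is not completely nonholonomic: Lie^∞_{(x₀,0)}(ρ(D)) ≠ T ℝ²
    (∀ x₀ : ℝ,
      {v : ℝ × ℝ | ∃ V : ℝ × ℝ → ℝ × ℝ,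
          LieGen {W | ContDiff ℝ (⊤ : ℕ∞) W ∧ ∀ q, W q ∈ DistRho q} V ∧ V (x₀, 0) = v}
        ≠ Set.univ) := by
  constructor
  · intro f hf hcond p p'
    -- f is constant along horizontal lines
    have hhoriz : ∀ c x x' : ℝ, f (x, c) = f (x', c) := by
      intro c x x'
      have hd : Differentiable ℝ (fun x => f (x, c)) :=
        fun x => (hderiv_x f hf c x).differentiableAt
      have hz : ∀ x : ℝ, deriv (fun x => f (x, c)) x = 0 := by
        intro x
        rw [(hderiv_x f hf c x).deriv]
        exact (hcond (x, c)).1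
      exact is_const_of_deriv_eq_zero hd hz x x'
    -- the vertical slice h(y) = f(1,y)
    set h : ℝ → ℝ := fun y => f (1, y) with hh
    have hhC : ContDiff ℝ (⊤ : ℕ∞) h := hf.comp (contDiff_const.prodMk contDiff_id)
    have hderiv : ∀ y : ℝ, deriv h y = fderiv ℝ f (1, y) (0, 1) :=
      fun y => (hderiv_y f hf y).deriv
    have hz' : ∀ y : ℝ, y ≠ 0 → deriv h y = 0 := by
      intro y hy
      have := (hcond (1, y)).2
      simp only at this
      rw [hderiv y]
      rw [one_mul] at this
      exact (mul_eq_zero.mp this).resolve_left hy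
    have hderC : Continuous (deriv h) := hhC.continuous_deriv (by simp)
    have hz : ∀ y : ℝ, deriv h y = 0 := by
      have := Continuous.ext_on (dense_compl_singleton (0:ℝ)) hderC continuous_const
        (fun y hy => hz' y hy)
      intro y; exact congrFun this y
    have hconst : ∀ y y' : ℝ, h y = h y' :=
      is_const_of_deriv_eq_zero (fun y => hhC.differentiable (by simp) y) hz
    calc f p = f (1, p.2) := by rw [show p = (p.1, p.2) from rfl]; exact hhoriz p.2 p.1 1
      _ = f (1, p'.2) := hconst p.2 p'.2
      _ = f p' := by rw [show p' = (p'.1, p'.2) from rfl]; exact (hhoriz p'.2 p'.1 1).symm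
  · intro x₀ hset
    have h01 : ((0:ℝ), (1:ℝ)) ∈ {v : ℝ × ℝ | ∃ V : ℝ × ℝ → ℝ × ℝ,
        LieGen {W | ContDiff ℝ (⊤ : ℕ∞) W ∧ ∀ q, W q ∈ DistRho q} V ∧ V (x₀, 0) = v} := by
      rw [hset]; trivial
    obtain ⟨V, hV, hVeq⟩ := h01
    have := (lieGen_tangent hV).2 (x₀, 0) rfl
    rw [hVeq] at this
    exact one_ne_zero this
end

section
/- With the hypotheses of the previous setting, if the section α : Q → D* satisfies d^D α = 0, then for every q ∈ Q the kernel of #_{Λ_{D*}} at the point α(q) is contained in the annihilator of L_{α,D}(q): Ker(#_{Λ_{D*}}(α(q))) ⊆ (L_{α,D}(q))^0. -/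
/- STATEMENT 11.
Same trivialized model and notation as for Statement 10: Q = EQ, D* = EQ × W with
W = V →L[ℝ] ℝ, bivector Λ_{D*} encoded by # (fiberwise `sharp`), the induced
skew-symmetric algebroid (⟦·,·⟧_D, ρ_D) characterized by the bracket
{φ,ψ}(m) = dψ(m)(#_m(dφ(m))), and L_{α,D}(q) = (T_qα)(ρ_D(D_q))
= {(v, Dα(q)v) : v ∈ ρ_D(D_q)}.  If the section α : Q → D* is a 1-cocycle,
d^Dα = 0, then for every q ∈ Q:  Ker(#_{Λ_{D*}}(α(q))) ⊆ (L_{α,D}(q))⁰. -/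

theorem stmt11 {EQ V : Type*} [NormedAddCommGroup EQ] [NormedSpace ℝ EQ]
    [NormedAddCommGroup V] [NormedSpace ℝ V]
    (sharp : ∀ _ : EQ × (V →L[ℝ] ℝ),
      ((EQ × (V →L[ℝ] ℝ)) →L[ℝ] ℝ) →ₗ[ℝ] (EQ × (V →L[ℝ] ℝ)))
    (hskew : ∀ (m : EQ × (V →L[ℝ] ℝ)) (β γ : (EQ × (V →L[ℝ] ℝ)) →L[ℝ] ℝ),
      γ (sharp m β) = - β (sharp m γ))
    (br : (EQ → V) → (EQ → V) → (EQ → V))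
    (ρ : EQ → (V →L[ℝ] EQ))
    (hbr : ∀ X Y : EQ → V, ContDiff ℝ (⊤ : ℕ∞) X → ContDiff ℝ (⊤ : ℕ∞) Y →
      ∀ m : EQ × (V →L[ℝ] ℝ),
        m.2 (br X Y m.1) =
          - fderiv ℝ (fun m' : EQ × (V →L[ℝ] ℝ) => m'.2 (Y m'.1)) m
              (sharp m (fderiv ℝ (fun m' : EQ × (V →L[ℝ] ℝ) => m'.2 (X m'.1)) m)))
    (hanc : ∀ (X : EQ → V) (f : EQ → ℝ), ContDiff ℝ (⊤ : ℕ∞) X → ContDiff ℝ (⊤ : ℕ∞) f →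
      ∀ m : EQ × (V →L[ℝ] ℝ),
        fderiv ℝ f m.1 (ρ m.1 (X m.1)) =
          fderiv ℝ (fun m' : EQ × (V →L[ℝ] ℝ) => m'.2 (X m'.1)) m
            (sharp m (fderiv ℝ (fun m' : EQ × (V →L[ℝ] ℝ) => f m'.1) m)))
    (hbasic : ∀ f g : EQ → ℝ, ContDiff ℝ (⊤ : ℕ∞) f → ContDiff ℝ (⊤ : ℕ∞) g →
      ∀ m : EQ × (V →L[ℝ] ℝ),
        fderiv ℝ (fun m' : EQ × (V →L[ℝ] ℝ) => g m'.1) m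
          (sharp m (fderiv ℝ (fun m' : EQ × (V →L[ℝ] ℝ) => f m'.1) m)) = 0)
    -- the section α : Q → D*
    (α : EQ → (V →L[ℝ] ℝ)) (hα : ContDiff ℝ (⊤ : ℕ∞) α)
    -- α is a 1-cocycle: d^Dα = 0
    (hcocycle : ∀ X Y : EQ → V, ContDiff ℝ (⊤ : ℕ∞) X → ContDiff ℝ (⊤ : ℕ∞) Y → ∀ q : EQ,
      fderiv ℝ (fun q' => α q' (Y q')) q (ρ q (X q))
        - fderiv ℝ (fun q' => α q' (X q')) q (ρ q (Y q))
        - α q (br X Y q) = 0) :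
    -- Ker(#_{Λ_{D*}}(α(q))) ⊆ (L_{α,D}(q))⁰ for every q
    ∀ (q : EQ) (β : (EQ × (V →L[ℝ] ℝ)) →L[ℝ] ℝ),
      sharp (q, α q) β = 0 →
      ∀ u ∈ (fun v : EQ => ((v, fderiv ℝ α q v) : EQ × (V →L[ℝ] ℝ))) ''
          Set.range (ρ q), β u = 0 := by
  intro q β hβ u hu
  obtain ⟨v, ⟨x, rfl⟩, rfl⟩ := hu
  set m : EQ × (V →L[ℝ] ℝ) := (q, α q) with hm
  have hα' : DifferentiableAt ℝ α q := (hα.differentiable (by simp)).differentiableAt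
  -- β kills the image of sharp m
  have hA : ∀ γ : (EQ × (V →L[ℝ] ℝ)) →L[ℝ] ℝ, β (sharp m γ) = 0 := by
    intro γ
    have h := hskew m β γ
    rw [hβ, map_zero] at h
    linarith
  -- evaluation covectors
  set Φ : V → ((EQ × (V →L[ℝ] ℝ)) →L[ℝ] ℝ) := fun y =>
    (ContinuousLinearMap.apply ℝ ℝ y).comp (ContinuousLinearMap.snd ℝ EQ (V →L[ℝ] ℝ)) with hΦdef
  have hΦ : ∀ y : V, fderiv ℝ (fun n : EQ × (V →L[ℝ] ℝ) => n.2 y) m = Φ y :=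
    fun y => (Φ y).fderiv
  have hFst : ∀ f : EQ → ℝ, ContDiff ℝ (⊤ : ℕ∞) f →
      fderiv ℝ (fun n : EQ × (V →L[ℝ] ℝ) => f n.1) m =
        (fderiv ℝ f q).comp (ContinuousLinearMap.fst ℝ EQ (V →L[ℝ] ℝ)) := by
    intro f hf
    exact (((hf.differentiable (by simp)) q).hasFDerivAt.comp m (hasFDerivAt_fst (p := m))).fderiv
  have heval : ∀ y : V, fderiv ℝ (fun q' => α q' y) q =
      (ContinuousLinearMap.apply ℝ ℝ y).comp (fderiv ℝ α q) :=
    fun y => ((ContinuousLinearMap.apply ℝ ℝ y).hasFDerivAt.comp q hα'.hasFDerivAt).fderiv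
  have hgx : ∀ y : V, ContDiff ℝ (⊤ : ℕ∞) (fun q' => α q' y) :=
    fun y => (ContinuousLinearMap.apply ℝ ℝ y).contDiff.comp hα
  -- the two Hamiltonian-type vectors
  set S : EQ × (V →L[ℝ] ℝ) := sharp m (Φ x) with hS
  set T : EQ × (V →L[ℝ] ℝ) :=
    sharp m (fderiv ℝ (fun n : EQ × (V →L[ℝ] ℝ) => α n.1 x) m) with hT
  -- first component of S
  have hS1 : ∀ ℓ : EQ →L[ℝ] ℝ, ℓ S.1 = - ℓ (ρ q x) := by
    intro ℓ
    have h1 : fderiv ℝ (⇑ℓ) q (ρ q x) =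
        fderiv ℝ (fun n : EQ × (V →L[ℝ] ℝ) => n.2 x) m
          (sharp m (fderiv ℝ (fun n : EQ × (V →L[ℝ] ℝ) => ℓ n.1) m)) :=
      hanc (fun _ => x) ⇑ℓ contDiff_const ℓ.contDiff m
    rw [hΦ x, hFst ⇑ℓ ℓ.contDiff, ℓ.fderiv] at h1
    have h2 := hskew m (ℓ.comp (ContinuousLinearMap.fst ℝ EQ (V →L[ℝ] ℝ))) (Φ x)
    rw [← hS] at h2
    simp only [ContinuousLinearMap.comp_apply, ContinuousLinearMap.coe_fst'] at h2 h1 ⊢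
    linarith
  -- first component of T
  have hT1 : ∀ ℓ : EQ →L[ℝ] ℝ, ℓ T.1 = 0 := by
    intro ℓ
    have h1 := hbasic (fun q' => α q' x) ⇑ℓ (hgx x) ℓ.contDiff m
    rw [hFst ⇑ℓ ℓ.contDiff] at h1
    rw [← hT] at h1
    simpa using h1
  -- second component of S
  have hS2 : ∀ y : V, S.2 y = - α q (br (fun _ => x) (fun _ => y) q) := by
    intro y
    have h1 : α q (br (fun _ => x) (fun _ => y) q) =
        - fderiv ℝ (fun n : EQ × (V →L[ℝ] ℝ) => n.2 y) m
            (sharp m (fderiv ℝ (fun n : EQ × (V →L[ℝ] ℝ) => n.2 x) m)) :=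
      hbr (fun _ => x) (fun _ => y) contDiff_const contDiff_const m
    rw [hΦ y, hΦ x, ← hS] at h1
    simp only [hΦdef, ContinuousLinearMap.comp_apply, ContinuousLinearMap.coe_snd',
      ContinuousLinearMap.apply_apply] at h1
    linarith
  -- second component of T
  have hT2 : ∀ y : V, T.2 y = fderiv ℝ α q (ρ q y) x := by
    intro y
    have h1 : fderiv ℝ (fun q' => α q' x) q (ρ q y) =
        fderiv ℝ (fun n : EQ × (V →L[ℝ] ℝ) => n.2 y) m
          (sharp m (fderiv ℝ (fun n : EQ × (V →L[ℝ] ℝ) => α n.1 x) m)) :=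
      hanc (fun _ => y) (fun q' => α q' x) contDiff_const (hgx x) m
    rw [hΦ y, ← hT, heval x] at h1
    simpa [hΦdef] using h1.symm
  -- the cocycle identity with constant sections
  have hco : ∀ y : V, α q (br (fun _ => x) (fun _ => y) q) =
      fderiv ℝ α q (ρ q x) y - fderiv ℝ α q (ρ q y) x := by
    intro y
    have h1 : fderiv ℝ (fun q' => α q' y) q (ρ q x)
        - fderiv ℝ (fun q' => α q' x) q (ρ q y)
        - α q (br (fun _ => x) (fun _ => y) q) = 0 :=
      hcocycle (fun _ => x) (fun _ => y) contDiff_const contDiff_const q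
    rw [heval y, heval x] at h1
    simp only [ContinuousLinearMap.comp_apply, ContinuousLinearMap.apply_apply] at h1
    linarith
  -- pin down the components of S - T
  have hST1 : (S - T).1 = - ρ q x := by
    have h0 : (S - T).1 + ρ q x = 0 := by
      apply NormedSpace.eq_zero_of_forall_dual_eq_zero ℝ
      intro ℓ
      have e1 := hS1 ℓ
      have e2 := hT1 ℓ
      simp only [Prod.fst_sub, map_add, map_sub]
      linarith
    exact eq_neg_of_add_eq_zero_left h0
  have hST2 : (S - T).2 = - fderiv ℝ α q (ρ q x) := by
    ext y
    have e1 := hS2 y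
    have e2 := hT2 y
    have e3 := hco y
    simp only [Prod.snd_sub, ContinuousLinearMap.sub_apply, ContinuousLinearMap.neg_apply]
    linarith
  have hSTval : S - T = -((ρ q x, fderiv ℝ α q (ρ q x)) : EQ × (V →L[ℝ] ℝ)) := by
    rw [Prod.ext_iff]
    exact ⟨hST1, hST2⟩
  -- conclude
  have hfin : β (S - T) = 0 := by
    rw [hS, hT, ← map_sub]
    exact hA _
  rw [hSTval, map_neg, neg_eq_zero] at hfin
  exact hfin
end

section
/- Let A → Q be a Lie algebroid, D ⊆ A a subbundle with orthogonal projector P : A → D relative to a bundle metric, d^A the Lie algebroid differential, and I(D^0) the algebraic ideal generated by the annihilator D^0 of D (sections of Λ^k A* vanishing when all arguments lie in D). Then the map α ↦ P* ∘ α is a bijection from {α ∈ Γ(D*) : d^D α = 0} onto {α̃ ∈ Γ((D^⊥)^0) : d^A α̃ ∈ I(D^0)}, with inverse α̃ ↦ i_D* ∘ α̃. Moreover, for f ∈ C^∞(Q), d^D f = 0 if and only if (d^A f)(q) ∈ D^0_q for all q ∈ Q. -/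
/-!
Everything happens fibrewise. Since `P ∘ i = id`, restricting `P* α` back to `D` returns `α`.
Since `a - i (P a)` is orthogonal to `D`, a covector `α̃` annihilating `D^⊥` satisfies
`α̃ = α̃ ∘ i ∘ P`; in particular `α̃ (P ⟦X, Y⟧_A)` and `α̃ ⟦X, Y⟧_A` agree, so the two cocycle
conditions coincide term by term. Finally `D^⊥ ⊆ ker P` because the metric is anisotropic, so
`P* α` annihilates `D^⊥`.
-/

section OrthogonalProjection

variable {R V W : Type*} [CommRing R] [AddCommGroup V] [Module R V] [AddCommGroup W] [Module R W]
  {i : W →ₗ[R] V} {P : V →ₗ[R] W} {G : V →ₗ[R] V →ₗ[R] R}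

theorem proj_eq_zero_of_orthogonal (hG : ∀ a, G a a = 0 → a = 0) (hPi : ∀ d, P (i d) = d)
    (hPorth : ∀ a d, G (a - i (P a)) (i d) = 0) {a : V} (ha : ∀ d, G a (i d) = 0) : P a = 0 := by
  have hiPa : i (P a) = 0 := hG _ <| by
    simpa [ha] using hPorth a (P a)
  rw [← hPi (P a), hiPa, map_zero]

theorem apply_inclusion_proj_eq_self (hPorth : ∀ a d, G (a - i (P a)) (i d) = 0)
    {α : Module.Dual R V} (hα : ∀ a, (∀ d, G a (i d) = 0) → α a = 0) (a : V) :
    α (i (P a)) = α a := by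
  have h : α (a - i (P a)) = 0 := hα _ (hPorth a)
  rwa [map_sub, sub_eq_zero, eq_comm] at h

end OrthogonalProjection

theorem stmt19_general {Q : Type*} (A : Q → Type*) (D : Q → Type*)
    [∀ q, AddCommGroup (A q)] [∀ q, Module ℝ (A q)]
    [∀ q, AddCommGroup (D q)] [∀ q, Module ℝ (D q)]
    -- the Lie algebroid structure on A
    (brA : (∀ q, A q) → (∀ q, A q) → (∀ q, A q))
    (ρA : (∀ q, A q) → (Q → ℝ) → (Q → ℝ))
    -- the subbundle D (inclusion i) and the metric G with orthogonal projector P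
    (i : ∀ q, D q →ₗ[ℝ] A q)
    (G : ∀ q, A q →ₗ[ℝ] A q →ₗ[ℝ] ℝ)
    (hGpos : ∀ q a, a ≠ 0 → 0 < G q a a)
    (P : ∀ q, A q →ₗ[ℝ] D q)
    (hPi : ∀ q (d : D q), P q (i q d) = d)
    (hPorth : ∀ q (a : A q) (d : D q), G q (a - i q (P q a)) (i q d) = 0) :
    -- the map α ↦ P*∘α is a bijection between the two sets of 1-cocycles,
    -- with inverse α̃ ↦ i_D*∘α̃:
    ((∀ α : ∀ q, Module.Dual ℝ (D q),
        -- if d^D α = 0 ...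
        (∀ (X Y : ∀ q, D q) (q : Q),
          ρA (fun r => i r (X r)) (fun r => α r (Y r)) q
            - ρA (fun r => i r (Y r)) (fun r => α r (X r)) q
            - α q (P q (brA (fun r => i r (X r)) (fun r => i r (Y r)) q)) = 0) →
        -- ... then P*∘α takes values in (D^⊥)⁰ ...
        ((∀ (q : Q) (a : A q), (∀ d : D q, G q a (i q d) = 0) →
            (α q).comp (P q) a = 0) ∧
         -- ... d^A(P*∘α) ∈ I(D⁰) ...
         (∀ (X Y : ∀ q, D q) (q : Q),
            ρA (fun r => i r (X r)) (fun r => ((α r).comp (P r)) (i r (Y r))) q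
              - ρA (fun r => i r (Y r)) (fun r => ((α r).comp (P r)) (i r (X r))) q
              - ((α q).comp (P q)) (brA (fun r => i r (X r)) (fun r => i r (Y r)) q)
              = 0) ∧
         -- ... and i_D* ∘ (P* ∘ α) = α
         (fun q => ((α q).comp (P q)).comp (i q)) = α)) ∧
     (∀ αt : ∀ q, Module.Dual ℝ (A q),
        -- if α̃ takes values in (D^⊥)⁰ and d^Aα̃ ∈ I(D⁰) ...
        (∀ (q : Q) (a : A q), (∀ d : D q, G q a (i q d) = 0) → αt q a = 0) →
        (∀ (X Y : ∀ q, D q) (q : Q),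
          ρA (fun r => i r (X r)) (fun r => αt r (i r (Y r))) q
            - ρA (fun r => i r (Y r)) (fun r => αt r (i r (X r))) q
            - αt q (brA (fun r => i r (X r)) (fun r => i r (Y r)) q) = 0) →
        -- ... then i_D*∘α̃ satisfies d^D(i_D*∘α̃) = 0 ...
        ((∀ (X Y : ∀ q, D q) (q : Q),
            ρA (fun r => i r (X r)) (fun r => ((αt r).comp (i r)) (Y r)) q
              - ρA (fun r => i r (Y r)) (fun r => ((αt r).comp (i r)) (X r)) q
              - ((αt q).comp (i q))
                  (P q (brA (fun r => i r (X r)) (fun r => i r (Y r)) q)) = 0) ∧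
         -- ... and P* ∘ (i_D* ∘ α̃) = α̃
         (fun q => ((αt q).comp (i q)).comp (P q)) = αt))) ∧
    -- moreover, for f ∈ C^∞(Q): d^D f = 0 ⟺ (d^A f)(q) ∈ D⁰_q for all q
    (∀ f : Q → ℝ,
      (∀ X : ∀ q, D q, ρA (fun r => i r (X r)) f = 0) ↔
      (∀ (X : ∀ q, D q) (q : Q), ρA (fun r => i r (X r)) f q = 0)) := by
  have hG : ∀ q a, G q a a = 0 → a = 0 := fun q a h =>
    Classical.byContradiction fun ha => (hGpos q a ha).ne' h
  have hαt {αt : ∀ q, Module.Dual ℝ (A q)}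
      (h : ∀ q a, (∀ d : D q, G q a (i q d) = 0) → αt q a = 0) q :=
    apply_inclusion_proj_eq_self (hPorth q) (h q)
  refine ⟨⟨fun α hα => ⟨?_, ?_, ?_⟩, fun αt hann hcocycle => ⟨?_, ?_⟩⟩, ?_⟩
  · intro q a ha
    simp [proj_eq_zero_of_orthogonal (hG q) (hPi q) (hPorth q) ha]
  · simpa [hPi] using hα
  · ext q d
    simp [hPi]
  · intro X Y q
    simpa [hαt hann q] using hcocycle X Y q
  · exact funext fun q => LinearMap.ext (hαt hann q)
  · intro f
    simp only [funext_iff, Pi.zero_apply]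

theorem stmt19 {Q : Type*} (A : Q → Type*) (D : Q → Type*)
    [∀ q, AddCommGroup (A q)] [∀ q, Module ℝ (A q)]
    [∀ q, AddCommGroup (D q)] [∀ q, Module ℝ (D q)]
    -- the Lie algebroid structure on A
    (brA : (∀ q, A q) → (∀ q, A q) → (∀ q, A q))
    (ρA : (∀ q, A q) → (Q → ℝ) → (Q → ℝ))
    (hskewA : ∀ X Y, brA X Y = - brA Y X)
    (hJacobiA : ∀ X Y Z, brA (brA X Y) Z + brA (brA Y Z) X + brA (brA Z X) Y = 0)
    (hρadd : ∀ X Y f, ρA (X + Y) f = ρA X f + ρA Y f)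
    (hρfun : ∀ (g : Q → ℝ) X f, ρA (fun q => g q • X q) f = g * ρA X f)
    (hρder : ∀ X f g, ρA X (f * g) = f * ρA X g + g * ρA X f)
    (hleibnizA : ∀ X Y (f : Q → ℝ),
      brA X (fun q => f q • Y q) = fun q => f q • brA X Y q + ρA X f q • Y q)
    -- the subbundle D (inclusion i) and the metric G with orthogonal projector P
    (i : ∀ q, D q →ₗ[ℝ] A q) (hiinj : ∀ q, Function.Injective (i q))
    (G : ∀ q, A q →ₗ[ℝ] A q →ₗ[ℝ] ℝ)
    (hGsymm : ∀ q a b, G q a b = G q b a)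
    (hGpos : ∀ q a, a ≠ 0 → 0 < G q a a)
    (P : ∀ q, A q →ₗ[ℝ] D q)
    (hPi : ∀ q (d : D q), P q (i q d) = d)
    (hPorth : ∀ q (a : A q) (d : D q), G q (a - i q (P q a)) (i q d) = 0) :
    -- the map α ↦ P*∘α is a bijection between the two sets of 1-cocycles,
    -- with inverse α̃ ↦ i_D*∘α̃:
    ((∀ α : ∀ q, Module.Dual ℝ (D q),
        -- if d^D α = 0 ...
        (∀ (X Y : ∀ q, D q) (q : Q),
          ρA (fun r => i r (X r)) (fun r => α r (Y r)) q
            - ρA (fun r => i r (Y r)) (fun r => α r (X r)) q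
            - α q (P q (brA (fun r => i r (X r)) (fun r => i r (Y r)) q)) = 0) →
        -- ... then P*∘α takes values in (D^⊥)⁰ ...
        ((∀ (q : Q) (a : A q), (∀ d : D q, G q a (i q d) = 0) →
            (α q).comp (P q) a = 0) ∧
         -- ... d^A(P*∘α) ∈ I(D⁰) ...
         (∀ (X Y : ∀ q, D q) (q : Q),
            ρA (fun r => i r (X r)) (fun r => ((α r).comp (P r)) (i r (Y r))) q
              - ρA (fun r => i r (Y r)) (fun r => ((α r).comp (P r)) (i r (X r))) q
              - ((α q).comp (P q)) (brA (fun r => i r (X r)) (fun r => i r (Y r)) q)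
              = 0) ∧
         -- ... and i_D* ∘ (P* ∘ α) = α
         (fun q => ((α q).comp (P q)).comp (i q)) = α)) ∧
     (∀ αt : ∀ q, Module.Dual ℝ (A q),
        -- if α̃ takes values in (D^⊥)⁰ and d^Aα̃ ∈ I(D⁰) ...
        (∀ (q : Q) (a : A q), (∀ d : D q, G q a (i q d) = 0) → αt q a = 0) →
        (∀ (X Y : ∀ q, D q) (q : Q),
          ρA (fun r => i r (X r)) (fun r => αt r (i r (Y r))) q
            - ρA (fun r => i r (Y r)) (fun r => αt r (i r (X r))) q
            - αt q (brA (fun r => i r (X r)) (fun r => i r (Y r)) q) = 0) →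
        -- ... then i_D*∘α̃ satisfies d^D(i_D*∘α̃) = 0 ...
        ((∀ (X Y : ∀ q, D q) (q : Q),
            ρA (fun r => i r (X r)) (fun r => ((αt r).comp (i r)) (Y r)) q
              - ρA (fun r => i r (Y r)) (fun r => ((αt r).comp (i r)) (X r)) q
              - ((αt q).comp (i q))
                  (P q (brA (fun r => i r (X r)) (fun r => i r (Y r)) q)) = 0) ∧
         -- ... and P* ∘ (i_D* ∘ α̃) = α̃
         (fun q => ((αt q).comp (i q)).comp (P q)) = αt))) ∧
    -- moreover, for f ∈ C^∞(Q): d^D f = 0 ⟺ (d^A f)(q) ∈ D⁰_q for all q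
    (∀ f : Q → ℝ,
      (∀ X : ∀ q, D q, ρA (fun r => i r (X r)) f = 0) ↔
      (∀ (X : ∀ q, D q) (q : Q), ρA (fun r => i r (X r)) f q = 0)) :=
  stmt19_general A D brA ρA i G hGpos P hPi hPorth
end
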